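/- arXiv:1901.02315 — 2 statements merged into one kernel-verified Lean document; each statement's English description precedes it below -/
import Mathlib

section
/- The decomposition of the complex coefficient Δt/(ε₀(εᵣ + (j₁+j₂)h)) in bicomplex arithmetic yields real and imaginary parts α^R, α^{I₁}, α^{I₂}, α^{I₁₂} each of absolute value at most Δt/(ε₀εᵣ), for any h and εᵣ > 0. -/
/-!
Multiplying `a + b(j₁+j₂)` (with `a = ε₀εᵣ`, `b = ε₀h`) by the "conjugate"
`(a² + 2b²) - ab(j₁+j₂) + 2b² j₁j₂` gives the real number `a(a² + 4b²)`, so the solution is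
`α = Δt/(a(a² + 4b²))` times that conjugate. Each of its coefficients is at most `a² + 4b²` in
absolute value (for `ab` by AM-GM), whence every coefficient of `α` is bounded by `Δt/a`.
-/

/-- Bicomplex numbers `x + j₁ y + j₂ z + j₁j₂ w` with real coefficients. -/
@[ext] structure Bicomplex where
  x : ℝ
  y : ℝ
  z : ℝ
  w : ℝ

namespace Bicomplex

instance : Add Bicomplex := ⟨fun a b => ⟨a.x + b.x, a.y + b.y, a.z + b.z, a.w + b.w⟩⟩
instance : Neg Bicomplex := ⟨fun a => ⟨-a.x, -a.y, -a.z, -a.w⟩⟩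
instance : Zero Bicomplex := ⟨⟨0, 0, 0, 0⟩⟩
instance : One Bicomplex := ⟨⟨1, 0, 0, 0⟩⟩
instance : Mul Bicomplex :=
  ⟨fun a b =>
    ⟨a.x * b.x - a.y * b.y - a.z * b.z + a.w * b.w,
     a.x * b.y + a.y * b.x - a.z * b.w - a.w * b.z,
     a.x * b.z + a.z * b.x - a.y * b.w - a.w * b.y,
     a.x * b.w + a.w * b.x + a.y * b.z + a.z * b.y⟩⟩

@[simp] lemma add_x (a b : Bicomplex) : (a + b).x = a.x + b.x := rfl
@[simp] lemma add_y (a b : Bicomplex) : (a + b).y = a.y + b.y := rfl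
@[simp] lemma add_z (a b : Bicomplex) : (a + b).z = a.z + b.z := rfl
@[simp] lemma add_w (a b : Bicomplex) : (a + b).w = a.w + b.w := rfl
@[simp] lemma neg_x (a : Bicomplex) : (-a).x = -a.x := rfl
@[simp] lemma neg_y (a : Bicomplex) : (-a).y = -a.y := rfl
@[simp] lemma neg_z (a : Bicomplex) : (-a).z = -a.z := rfl
@[simp] lemma neg_w (a : Bicomplex) : (-a).w = -a.w := rfl
@[simp] lemma zero_x : (0 : Bicomplex).x = 0 := rfl
@[simp] lemma zero_y : (0 : Bicomplex).y = 0 := rfl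
@[simp] lemma zero_z : (0 : Bicomplex).z = 0 := rfl
@[simp] lemma zero_w : (0 : Bicomplex).w = 0 := rfl
@[simp] lemma one_x : (1 : Bicomplex).x = 1 := rfl
@[simp] lemma one_y : (1 : Bicomplex).y = 0 := rfl
@[simp] lemma one_z : (1 : Bicomplex).z = 0 := rfl
@[simp] lemma one_w : (1 : Bicomplex).w = 0 := rfl
@[simp] lemma mul_x (a b : Bicomplex) :
    (a * b).x = a.x * b.x - a.y * b.y - a.z * b.z + a.w * b.w := rfl
@[simp] lemma mul_y (a b : Bicomplex) :
    (a * b).y = a.x * b.y + a.y * b.x - a.z * b.w - a.w * b.z := rfl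
@[simp] lemma mul_z (a b : Bicomplex) :
    (a * b).z = a.x * b.z + a.z * b.x - a.y * b.w - a.w * b.y := rfl
@[simp] lemma mul_w (a b : Bicomplex) :
    (a * b).w = a.x * b.w + a.w * b.x + a.y * b.z + a.z * b.y := rfl

instance : CommRing Bicomplex where
  add_assoc a b c := by ext <;> simp <;> ring
  zero_add a := by ext <;> simp
  add_zero a := by ext <;> simp
  add_comm a b := by ext <;> simp <;> ring
  mul_assoc a b c := by ext <;> simp <;> ring
  one_mul a := by ext <;> simp
  mul_one a := by ext <;> simp
  left_distrib a b c := by ext <;> simp <;> ring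
  right_distrib a b c := by ext <;> simp <;> ring
  zero_mul a := by ext <;> simp
  mul_zero a := by ext <;> simp
  neg_add_cancel a := by ext <;> simp
  mul_comm a b := by ext <;> simp <;> ring
  nsmul := nsmulRec
  zsmul := zsmulRec

/-- The first imaginary unit `j₁`. -/
def j1 : Bicomplex := ⟨0, 1, 0, 0⟩
/-- The second imaginary unit `j₂`. -/
def j2 : Bicomplex := ⟨0, 0, 1, 0⟩

/-- The canonical ring homomorphism from `ℝ` into the bicomplex numbers. -/
def constHom : ℝ →+* Bicomplex where
  toFun r := ⟨r, 0, 0, 0⟩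
  map_one' := rfl
  map_mul' a b := by ext <;> simp
  map_zero' := rfl
  map_add' a b := by ext <;> simp

@[simp] lemma constHom_x (r : ℝ) : (constHom r).x = r := rfl
@[simp] lemma constHom_y (r : ℝ) : (constHom r).y = 0 := rfl
@[simp] lemma constHom_z (r : ℝ) : (constHom r).z = 0 := rfl
@[simp] lemma constHom_w (r : ℝ) : (constHom r).w = 0 := rfl

end Bicomplex

open Bicomplex

namespace Bicomplex

def cofactor (a b : ℝ) : Bicomplex := ⟨a ^ 2 + 2 * b ^ 2, -(a * b), -(a * b), 2 * b ^ 2⟩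

@[simp] lemma constHom_mul_x (r : ℝ) (a : Bicomplex) : (constHom r * a).x = r * a.x := by simp
@[simp] lemma constHom_mul_y (r : ℝ) (a : Bicomplex) : (constHom r * a).y = r * a.y := by simp
@[simp] lemma constHom_mul_z (r : ℝ) (a : Bicomplex) : (constHom r * a).z = r * a.z := by simp
@[simp] lemma constHom_mul_w (r : ℝ) (a : Bicomplex) : (constHom r * a).w = r * a.w := by simp

lemma mul_cofactor (a b : ℝ) :
    (constHom a + constHom b * (j1 + j2)) * cofactor a b =
      constHom (a * (a ^ 2 + 4 * b ^ 2)) := by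
  ext <;> simp [cofactor, j1, j2, -map_add, -map_mul, -map_pow] <;> ring

lemma abs_cofactor_le (a b : ℝ) :
    |(cofactor a b).x| ≤ a ^ 2 + 4 * b ^ 2 ∧ |(cofactor a b).y| ≤ a ^ 2 + 4 * b ^ 2 ∧
      |(cofactor a b).z| ≤ a ^ 2 + 4 * b ^ 2 ∧ |(cofactor a b).w| ≤ a ^ 2 + 4 * b ^ 2 := by
  have hab : |-(a * b)| ≤ a ^ 2 + 4 * b ^ 2 := by
    rw [abs_neg, abs_mul]
    nlinarith [sq_abs a, sq_abs b, sq_nonneg (|a| - 2 * |b|), abs_nonneg a, abs_nonneg b]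
  refine ⟨?_, hab, hab, ?_⟩ <;> simp only [cofactor] <;>
    rw [abs_of_nonneg (by positivity)] <;> nlinarith [sq_nonneg b]

lemma eq_of_mul_eq_constHom {a b c : ℝ} {α : Bicomplex} (ha : a ≠ 0)
    (h : (constHom a + constHom b * (j1 + j2)) * α = constHom c) :
    α = constHom (c / (a * (a ^ 2 + 4 * b ^ 2))) * cofactor a b := by
  have hne : a * (a ^ 2 + 4 * b ^ 2) ≠ 0 := mul_ne_zero ha (by positivity)
  have key : constHom (a * (a ^ 2 + 4 * b ^ 2)) * α = constHom c * cofactor a b := by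
    rw [← mul_cofactor, mul_right_comm, h]
  calc α = constHom ((a * (a ^ 2 + 4 * b ^ 2))⁻¹ * (a * (a ^ 2 + 4 * b ^ 2))) * α := by
        rw [inv_mul_cancel₀ hne, map_one, one_mul]
    _ = constHom (a * (a ^ 2 + 4 * b ^ 2))⁻¹ * (constHom c * cofactor a b) := by
        rw [map_mul, mul_assoc, key]
    _ = constHom (c / (a * (a ^ 2 + 4 * b ^ 2))) * cofactor a b := by
        rw [← mul_assoc, ← map_mul, div_eq_inv_mul]

lemma abs_coords_le_of_mul_eq_constHom {a b c : ℝ} {α : Bicomplex} (ha : 0 < a) (hc : 0 ≤ c)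
    (h : (constHom a + constHom b * (j1 + j2)) * α = constHom c) :
    |α.x| ≤ c / a ∧ |α.y| ≤ c / a ∧ |α.z| ≤ c / a ∧ |α.w| ≤ c / a := by
  rw [eq_of_mul_eq_constHom ha.ne' h]
  simp only [constHom_mul_x, constHom_mul_y, constHom_mul_z, constHom_mul_w]
  set S := a ^ 2 + 4 * b ^ 2
  have hS : 0 < S := by positivity
  have ht : 0 ≤ c / (a * S) := by positivity
  have scale : c / (a * S) * S = c / a := by field_simp
  have bound : ∀ r : ℝ, |r| ≤ S → |c / (a * S) * r| ≤ c / a := fun r hr => by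
    rw [abs_mul, abs_of_nonneg ht, ← scale]
    exact mul_le_mul_of_nonneg_left hr ht
  obtain ⟨hx, hy, hz, hw⟩ := abs_cofactor_le a b
  exact ⟨bound _ hx, bound _ hy, bound _ hz, bound _ hw⟩

end Bicomplex

/-- The decomposition of `Δt/(ε₀(εᵣ + (j₁+j₂)h))` in bicomplex arithmetic yields real and
imaginary parts `α^R, α^{I₁}, α^{I₂}, α^{I₁₂}`, each of absolute value at most
`Δt/(ε₀εᵣ)`, for any real `h` and `εᵣ > 0`. -/
theorem bicomplex_update_coefficient_bounds (Δt ε₀ εᵣ h : ℝ)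
    (hΔt : 0 < Δt) (hε₀ : 0 < ε₀) (hεᵣ : 0 < εᵣ) :
    ∀ α : Bicomplex,
      constHom ε₀ * (constHom εᵣ + constHom h * (j1 + j2)) * α = constHom Δt →
      |α.x| ≤ Δt / (ε₀ * εᵣ) ∧ |α.y| ≤ Δt / (ε₀ * εᵣ) ∧
      |α.z| ≤ Δt / (ε₀ * εᵣ) ∧ |α.w| ≤ Δt / (ε₀ * εᵣ) := by
  intro α hα
  have expand : constHom ε₀ * (constHom εᵣ + constHom h * (j1 + j2)) =
      constHom (ε₀ * εᵣ) + constHom (ε₀ * h) * (j1 + j2) := by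
    rw [map_mul, map_mul, mul_add, mul_assoc]
  rw [expand] at hα
  exact abs_coords_le_of_mul_eq_constHom (mul_pos hε₀ hεᵣ) hΔt.le hα
end

section
/- Multicomplex step approximation of a mixed partial: for a real polynomial F(ξ₁, ξ₂) of two variables, the coefficient of j₁j₂ in F(ξ₁ + j₁h₁, ξ₂ + j₂h₂), computed in the bicomplex ring, equals h₁h₂·∂²F/∂ξ₁∂ξ₂(ξ₁,ξ₂) + O(h₁h₂·(h₁²+h₂²)) as h₁, h₂ → 0. -/
open Bicomplex Filter Topology Asymptotics

/-!
Multiplying a bicomplex number by `ξ₁ + h₁ j₁` mixes each coefficient with the one whose unit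
differs by `j₁`, with weight `h₁`, and `j₁² = -1` turns two such steps into `-h₁²` (likewise for
index 2). So, by induction over monomials, the coefficients of `1`, `j₁`, `j₂`, `j₁j₂` in
`F(ξ₁ + h₁ j₁, ξ₂ + h₂ j₂)` are `F`, `h₁ ∂₁F`, `h₂ ∂₂F`, `h₁h₂ ∂₁∂₂F` at `(ξ₁, ξ₂)`, each up to an
error (with the same prefactor) of the form `h₁² A + h₂² B` with `A`, `B` continuous in `h`.
Such an error is `O(h₁² + h₂²)` as `h → 0`.
-/

namespace Bicomplex

open MvPolynomial

noncomputable def stepEval (ξ₁ ξ₂ : ℝ) (F : MvPolynomial (Fin 2) ℝ) (h : ℝ × ℝ) : Bicomplex :=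
  eval₂ constHom
    (fun i : Fin 2 => if i = 0 then constHom ξ₁ + constHom h.1 * j1
      else constHom ξ₂ + constHom h.2 * j2) F

def stepSqIdeal : Ideal C(ℝ × ℝ, ℝ) :=
  Ideal.span {ContinuousMap.fst ^ 2, ContinuousMap.snd ^ 2}

lemma fst_sq_mem_stepSqIdeal : ContinuousMap.fst ^ 2 ∈ stepSqIdeal :=
  Ideal.subset_span (Set.mem_insert _ _)

lemma snd_sq_mem_stepSqIdeal : ContinuousMap.snd ^ 2 ∈ stepSqIdeal :=
  Ideal.subset_span (Set.mem_insert_of_mem _ rfl)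

lemma isBigO_of_mem_stepSqIdeal {g : C(ℝ × ℝ, ℝ)} (hg : g ∈ stepSqIdeal) :
    (g : ℝ × ℝ → ℝ) =O[𝓝 0] fun h => h.1 ^ 2 + h.2 ^ 2 := by
  obtain ⟨a, b, rfl⟩ := Ideal.mem_span_pair.mp hg
  have bounded (c : C(ℝ × ℝ, ℝ)) : (c : ℝ × ℝ → ℝ) =O[𝓝 0] fun _ => (1 : ℝ) :=
    (c.continuous.tendsto 0).isBigO_one ℝ
  have fst_sq : (fun h : ℝ × ℝ => h.1 ^ 2) =O[𝓝 0] fun h => h.1 ^ 2 + h.2 ^ 2 :=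
    isBigO_of_le _ fun h => by
      rw [Real.norm_of_nonneg (by positivity), Real.norm_of_nonneg (by positivity)]
      linarith [sq_nonneg h.2]
  have snd_sq : (fun h : ℝ × ℝ => h.2 ^ 2) =O[𝓝 0] fun h => h.1 ^ 2 + h.2 ^ 2 :=
    isBigO_of_le _ fun h => by
      rw [Real.norm_of_nonneg (by positivity), Real.norm_of_nonneg (by positivity)]
      linarith [sq_nonneg h.1]
  exact (((bounded a).mul fst_sq).add ((bounded b).mul snd_sq)).congr (fun _ => by simp)
    fun _ => by simp

def HasStepExpansion (ξ₁ ξ₂ : ℝ) (F : MvPolynomial (Fin 2) ℝ) : Prop :=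
  let ev := eval fun i : Fin 2 => if i = 0 then ξ₁ else ξ₂
  ∃ a ∈ stepSqIdeal, ∃ b ∈ stepSqIdeal, ∃ c ∈ stepSqIdeal, ∃ d ∈ stepSqIdeal, ∀ h : ℝ × ℝ,
    (stepEval ξ₁ ξ₂ F h).x = ev F + a h ∧
    (stepEval ξ₁ ξ₂ F h).y = h.1 * (ev (pderiv 0 F) + b h) ∧
    (stepEval ξ₁ ξ₂ F h).z = h.2 * (ev (pderiv 1 F) + c h) ∧
    (stepEval ξ₁ ξ₂ F h).w = h.1 * h.2 * (ev (pderiv 1 (pderiv 0 F)) + d h)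

variable {ξ₁ ξ₂ : ℝ}

lemma stepEval_C (r : ℝ) (h : ℝ × ℝ) : stepEval ξ₁ ξ₂ (C r) h = constHom r :=
  eval₂_C _ _ _

lemma stepEval_add (F G : MvPolynomial (Fin 2) ℝ) (h : ℝ × ℝ) :
    stepEval ξ₁ ξ₂ (F + G) h = stepEval ξ₁ ξ₂ F h + stepEval ξ₁ ξ₂ G h :=
  eval₂_add _ _

lemma stepEval_mul_X_zero (F : MvPolynomial (Fin 2) ℝ) (h : ℝ × ℝ) :
    stepEval ξ₁ ξ₂ (F * X 0) h = stepEval ξ₁ ξ₂ F h * ⟨ξ₁, h.1, 0, 0⟩ := by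
  rw [stepEval, eval₂_mul, eval₂_X]
  congr 1
  ext <;> simp [j1]

lemma stepEval_mul_X_one (F : MvPolynomial (Fin 2) ℝ) (h : ℝ × ℝ) :
    stepEval ξ₁ ξ₂ (F * X 1) h = stepEval ξ₁ ξ₂ F h * ⟨ξ₂, 0, h.2, 0⟩ := by
  rw [stepEval, eval₂_mul, eval₂_X]
  congr 1
  ext <;> simp [j2]

lemma hasStepExpansion_C (r : ℝ) : HasStepExpansion ξ₁ ξ₂ (C r) :=
  ⟨0, zero_mem _, 0, zero_mem _, 0, zero_mem _, 0, zero_mem _, fun h => by simp [stepEval_C]⟩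

lemma HasStepExpansion.add {F G : MvPolynomial (Fin 2) ℝ} (hF : HasStepExpansion ξ₁ ξ₂ F)
    (hG : HasStepExpansion ξ₁ ξ₂ G) : HasStepExpansion ξ₁ ξ₂ (F + G) := by
  obtain ⟨a, ha, b, hb, c, hc, d, hd, hF⟩ := hF
  obtain ⟨a', ha', b', hb', c', hc', d', hd', hG⟩ := hG
  refine ⟨a + a', add_mem ha ha', b + b', add_mem hb hb', c + c', add_mem hc hc',
    d + d', add_mem hd hd', fun h => ?_⟩
  obtain ⟨hFx, hFy, hFz, hFw⟩ := hF h
  obtain ⟨hGx, hGy, hGz, hGw⟩ := hG h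
  simp only [stepEval_add, add_x, add_y, add_z, add_w, map_add, ContinuousMap.add_apply]
  exact ⟨by linear_combination hFx + hGx, by linear_combination hFy + hGy,
    by linear_combination hFz + hGz, by linear_combination hFw + hGw⟩

lemma HasStepExpansion.mul_X_zero {F : MvPolynomial (Fin 2) ℝ}
    (hF : HasStepExpansion ξ₁ ξ₂ F) : HasStepExpansion ξ₁ ξ₂ (F * X 0) := by
  obtain ⟨a, ha, b, hb, c, hc, d, hd, hF⟩ := hF
  let ev := eval fun i : Fin 2 => if i = 0 then ξ₁ else ξ₂
  refine ⟨ξ₁ • a - ContinuousMap.fst ^ 2 * (.const _ (ev (pderiv 0 F)) + b),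
    sub_mem (Submodule.smul_of_tower_mem _ _ ha) (Ideal.mul_mem_right _ _ fst_sq_mem_stepSqIdeal),
    a + ξ₁ • b, add_mem ha (Submodule.smul_of_tower_mem _ _ hb),
    ξ₁ • c - ContinuousMap.fst ^ 2 * (.const _ (ev (pderiv 1 (pderiv 0 F))) + d),
    sub_mem (Submodule.smul_of_tower_mem _ _ hc) (Ideal.mul_mem_right _ _ fst_sq_mem_stepSqIdeal),
    ξ₁ • d + c, add_mem (Submodule.smul_of_tower_mem _ _ hd) hc, fun h => ?_⟩
  obtain ⟨hx, hy, hz, hw⟩ := hF h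
  simp only [stepEval_mul_X_zero, mul_x, mul_y, mul_z, mul_w, mul_zero, mul_one, sub_zero,
    add_zero, zero_add, map_add, map_mul, eval_X, ↓reduceIte, Derivation.leibniz, pderiv_X,
    Pi.single_eq_same, Pi.single_eq_of_ne, ne_eq, zero_ne_one, not_false_eq_true, smul_eq_mul,
    ContinuousMap.sub_apply, ContinuousMap.coe_smul, Pi.smul_apply, ContinuousMap.mul_apply,
    ContinuousMap.pow_apply, ContinuousMap.fst_apply, ContinuousMap.add_apply,
    ContinuousMap.const_apply, ev]
  exact ⟨by linear_combination ξ₁ * hx - h.1 * hy, by linear_combination h.1 * hx + ξ₁ * hy,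
    by linear_combination ξ₁ * hz - h.1 * hw, by linear_combination ξ₁ * hw + h.1 * hz⟩

lemma HasStepExpansion.mul_X_one {F : MvPolynomial (Fin 2) ℝ}
    (hF : HasStepExpansion ξ₁ ξ₂ F) : HasStepExpansion ξ₁ ξ₂ (F * X 1) := by
  obtain ⟨a, ha, b, hb, c, hc, d, hd, hF⟩ := hF
  let ev := eval fun i : Fin 2 => if i = 0 then ξ₁ else ξ₂
  refine ⟨ξ₂ • a - ContinuousMap.snd ^ 2 * (.const _ (ev (pderiv 1 F)) + c),
    sub_mem (Submodule.smul_of_tower_mem _ _ ha) (Ideal.mul_mem_right _ _ snd_sq_mem_stepSqIdeal),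
    ξ₂ • b - ContinuousMap.snd ^ 2 * (.const _ (ev (pderiv 1 (pderiv 0 F))) + d),
    sub_mem (Submodule.smul_of_tower_mem _ _ hb) (Ideal.mul_mem_right _ _ snd_sq_mem_stepSqIdeal),
    a + ξ₂ • c, add_mem ha (Submodule.smul_of_tower_mem _ _ hc),
    ξ₂ • d + b, add_mem (Submodule.smul_of_tower_mem _ _ hd) hb, fun h => ?_⟩
  obtain ⟨hx, hy, hz, hw⟩ := hF h
  simp only [stepEval_mul_X_one, mul_x, mul_y, mul_z, mul_w, mul_zero, mul_one, sub_zero,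
    add_zero, zero_add, map_add, map_mul, eval_X, one_ne_zero, ↓reduceIte, Derivation.leibniz,
    pderiv_X, Pi.single_eq_same, Pi.single_eq_of_ne, ne_eq, not_false_eq_true, smul_eq_mul,
    ContinuousMap.sub_apply, ContinuousMap.coe_smul, Pi.smul_apply, ContinuousMap.mul_apply,
    ContinuousMap.pow_apply, ContinuousMap.snd_apply, ContinuousMap.add_apply,
    ContinuousMap.const_apply, ev]
  exact ⟨by linear_combination ξ₂ * hx - h.2 * hz, by linear_combination ξ₂ * hy - h.2 * hw,
    by linear_combination h.2 * hx + ξ₂ * hz, by linear_combination ξ₂ * hw + h.2 * hy⟩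

variable (ξ₁ ξ₂) in
lemma hasStepExpansion (F : MvPolynomial (Fin 2) ℝ) : HasStepExpansion ξ₁ ξ₂ F := by
  induction F using MvPolynomial.induction_on with
  | C r => exact hasStepExpansion_C r
  | add F G hF hG => exact hF.add hG
  | mul_X F i hF =>
    fin_cases i
    · exact hF.mul_X_zero
    · exact hF.mul_X_one

end Bicomplex

/-- Multicomplex step approximation of a mixed partial: for a real polynomial `F(ξ₁, ξ₂)`,
the coefficient of `j₁j₂` in `F(ξ₁ + j₁h₁, ξ₂ + j₂h₂)`, computed in the bicomplex ring,
equals `h₁h₂·∂²F/∂ξ₁∂ξ₂ (ξ₁, ξ₂) + O(h₁h₂·(h₁² + h₂²))` as `(h₁, h₂) → 0`. -/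
theorem multicomplex_mixed_partial (F : MvPolynomial (Fin 2) ℝ) (ξ₁ ξ₂ : ℝ) :
    (fun p : ℝ × ℝ =>
        (MvPolynomial.eval₂ constHom
            (fun i : Fin 2 => if i = 0 then constHom ξ₁ + constHom p.1 * j1
              else constHom ξ₂ + constHom p.2 * j2) F).w -
          p.1 * p.2 *
            MvPolynomial.eval (fun i : Fin 2 => if i = 0 then ξ₁ else ξ₂)
              (MvPolynomial.pderiv 1 (MvPolynomial.pderiv 0 F)))
      =O[𝓝 (0 : ℝ × ℝ)] (fun p : ℝ × ℝ => p.1 * p.2 * (p.1 ^ 2 + p.2 ^ 2)) := by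
  obtain ⟨_, _, _, _, _, _, d, hd, hF⟩ := hasStepExpansion ξ₁ ξ₂ F
  refine ((isBigO_refl (fun p : ℝ × ℝ => p.1 * p.2) _).mul
    (isBigO_of_mem_stepSqIdeal hd)).congr_left fun p => ?_
  change _ = (stepEval ξ₁ ξ₂ F p).w - _
  linear_combination -(hF p).2.2.2
end
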